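/- In the model graph G, a vertex has a finite neighbour set if and only if it is a triangle-vertex, and every triangle-vertex of G has degree exactly 6 (it is adjacent to the three dual vertices x̃ with x ∈ T and to the exactly three triangles sharing an edge with T). -/

import Mathlib

/-- Adjacency relation of the Farey graph on `Option ℚ`: `some x` and `some y` are
adjacent iff `|x.num * y.den - y.num * x.den| = 1`, and `none` (representing `∞`)
is adjacent to `some x` iff `x.den = 1`. -/
def fareyAdj : Option ℚ → Option ℚ → Prop
  | some x, some y => |x.num * (y.den : ℤ) - y.num * (x.den : ℤ)| = 1
  | some x, none => x.den = 1
  | none, some x => x.den = 1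
  | none, none => False

/-- The Farey graph `𝔽` on the vertex set `Option ℚ`. -/
def fareyGraph : SimpleGraph (Option ℚ) where
  Adj := fareyAdj
  symm := ⟨by
    rintro (_ | x) (_ | y) h
    · exact h.elim
    · exact h
    · exact h
    · show |y.num * (x.den : ℤ) - x.num * (y.den : ℤ)| = 1
      rw [abs_sub_comm]
      exact h⟩
  loopless := ⟨by
    rintro (_ | x) h
    · exact h.elim
    · have : |x.num * (x.den : ℤ) - x.num * (x.den : ℤ)| = 1 := h
      simp at this⟩

/-- A triangle of the Farey graph: a 3-element clique. -/
def FareyTriangle : Type := {s : Finset (Option ℚ) // fareyGraph.IsNClique 3 s}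

/-- The Farey dual graph `𝔽*`: vertices are the triangles of the Farey graph, two
triangles being adjacent iff they are distinct and share exactly two vertices. -/
def fareyDual : SimpleGraph FareyTriangle where
  Adj T T' := T ≠ T' ∧ (T.1 ∩ T'.1).card = 2
  symm := ⟨by
    rintro T T' ⟨h1, h2⟩
    exact ⟨h1.symm, by rwa [Finset.inter_comm]⟩⟩
  loopless := ⟨fun T h => h.1 rfl⟩

/-- Vertices of the model graph: Farey vertices `.inl x`, dual vertices
`.inr (.inl x)` (written `x̃`), and triangle-vertices `.inr (.inr T)`. -/
abbrev ModelVertex : Type := Option ℚ ⊕ (Option ℚ ⊕ FareyTriangle)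

/-- Adjacency relation of the model graph `G`. -/
def modelAdj : ModelVertex → ModelVertex → Prop
  | .inl x, .inl y => fareyGraph.Adj x y
  | .inl x, .inr (.inl y) => x = y
  | .inr (.inl x), .inl y => x = y
  | .inr (.inl x), .inr (.inr T) => x ∈ T.1
  | .inr (.inr T), .inr (.inl x) => x ∈ T.1
  | .inr (.inr T), .inr (.inr T') => T ≠ T' ∧ (T.1 ∩ T'.1).card = 2
  | _, _ => False

/-- The model graph `G` of the pants graph of `N₃`: on `V(𝔽) ⊔ V(𝔽) ⊔ T(𝔽)`, with
edges `x—y` for `x, y` adjacent in `𝔽`, `x̃—x`, `x̃—T` whenever `x ∈ T`, and `T—T'`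
whenever `T ≠ T'` and `|T ∩ T'| = 2`. -/
def modelGraph : SimpleGraph ModelVertex where
  Adj := modelAdj
  symm := ⟨by
    rintro (x | x | T) (y | y | T') h
    · exact fareyGraph.adj_symm h
    · exact h.symm
    · exact h.elim
    · exact h.symm
    · exact h.elim
    · exact h
    · exact h.elim
    · exact h
    · exact ⟨h.1.symm, by
        have := h.2
        rwa [Finset.inter_comm]⟩⟩
  loopless := ⟨by
    rintro (x | x | T) h
    · exact fareyGraph.irrefl h
    · exact h.elim
    · exact h.1 rfl⟩

/-!
Farey vertices are the primitive vectors of `ℤ²` up to sign, adjacency meaning determinant `± 1`.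
By Cramer's rule a common neighbour of an edge `{P, Q}` is `±(P + Q)` or `±(P - Q)`, so every
edge of the Farey graph lies in exactly two triangles. Hence a triangle shares an edge with exactly
three others, and a triangle-vertex of the model graph has six neighbours: the dual vertices of its
three corners and these three triangles. On the other hand a vertex `P` has the infinitely many
neighbours `B + n • P`, where `det (P, B) = 1`, and each of them lies in a triangle through `P`;
so Farey vertices and dual vertices have infinite neighbourhoods.
-/

namespace SimpleGraph

variable {V : Type*} {G : SimpleGraph V} [DecidableEq V]

lemma IsNClique.exists_mem_commonNeighbors {s : Finset V} {u v : V} (hs : G.IsNClique 3 s)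
    (huv : u ≠ v) (h : {u, v} ⊆ s) : ∃ z ∈ G.commonNeighbors u v, s = {z, u, v} := by
  obtain ⟨z, -, rfl⟩ := Finset.exists_eq_insert_iff.mpr
    ⟨h, by rw [Finset.card_pair huv, hs.card_eq]⟩
  obtain ⟨hzu, hzv, -⟩ := is3Clique_triple_iff.mp hs
  exact ⟨z, ⟨hzu.symm, hzv.symm⟩, rfl⟩

lemma infinite_setOf_isNClique_three_mem
    (hG : ∀ ⦃u v⦄, G.Adj u v → (G.commonNeighbors u v).Nonempty) {x : V}
    (hx : (G.neighborSet x).Infinite) : {s : Finset V | G.IsNClique 3 s ∧ x ∈ s}.Infinite := by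
  intro hfin
  refine hx ((hfin.biUnion fun s _ => s.finite_toSet).subset fun y hy => ?_)
  obtain ⟨z, hxz, hyz⟩ := hG hy
  exact Set.mem_biUnion (x := {x, y, z})
    ⟨is3Clique_triple_iff.mpr ⟨hy, hxz, hyz⟩, by simp⟩ (by simp)

lemma IsNClique.eq_of_inter_eq (hG : ∀ ⦃u v⦄, G.Adj u v → (G.commonNeighbors u v).ncard = 2)
    {s t₁ t₂ : Finset V} (hs : G.IsNClique 3 s)
    (ht₁ : G.IsNClique 3 t₁) (ht₂ : G.IsNClique 3 t₂) (h₁ : s ≠ t₁) (h₂ : s ≠ t₂)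
    (hcard : (s ∩ t₁).card = 2) (h : s ∩ t₁ = s ∩ t₂) : t₁ = t₂ := by
  obtain ⟨u, v, huv, he⟩ := Finset.card_eq_two.mp hcard
  obtain ⟨c, hc, rfl⟩ := hs.exists_mem_commonNeighbors huv (he ▸ Finset.inter_subset_left)
  obtain ⟨z₁, hz₁, rfl⟩ := ht₁.exists_mem_commonNeighbors huv (he ▸ Finset.inter_subset_right)
  obtain ⟨z₂, hz₂, rfl⟩ :=
    ht₂.exists_mem_commonNeighbors huv (he ▸ h ▸ Finset.inter_subset_right)
  obtain ⟨x, y, -, hxy⟩ := Set.ncard_eq_two.mp (hG (is3Clique_triple_iff.mp hs).2.2)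
  have hz₁c : z₁ ≠ c := by rintro rfl; exact h₁ rfl
  have hz₂c : z₂ ≠ c := by rintro rfl; exact h₂ rfl
  rw [hxy] at hc hz₁ hz₂
  simp only [Set.mem_insert_iff, Set.mem_singleton_iff] at hc hz₁ hz₂
  obtain rfl : z₁ = z₂ := by grind
  rfl

lemma IsNClique.exists_isNClique_inter_eq
    (hG : ∀ ⦃u v⦄, G.Adj u v → (G.commonNeighbors u v).ncard = 2) {s e : Finset V}
    (hs : G.IsNClique 3 s) (he : e ⊆ s) (hcard : e.card = 2) :
    ∃ t, G.IsNClique 3 t ∧ s ≠ t ∧ s ∩ t = e := by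
  obtain ⟨u, v, huv, rfl⟩ := Finset.card_eq_two.mp hcard
  obtain ⟨c, hc, rfl⟩ := hs.exists_mem_commonNeighbors huv he
  have hadj := (is3Clique_triple_iff.mp hs).2.2
  obtain ⟨z, ⟨hzu, hzv⟩, hzc⟩ := Set.exists_ne_of_one_lt_ncard (by rw [hG hadj]; norm_num) c
  obtain ⟨hcu, hcv⟩ := hc
  refine ⟨{z, u, v}, is3Clique_triple_iff.mpr ⟨hzu.symm, hzv.symm, hadj⟩, fun h => ?_, ?_⟩
  · have hc' : c ∈ ({z, u, v} : Finset V) := h ▸ Finset.mem_insert_self c _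
    simp only [Finset.mem_insert, Finset.mem_singleton] at hc'
    rcases hc' with rfl | rfl | rfl
    exacts [hzc rfl, hcu.ne rfl, hcv.ne rfl]
  · have := hzu.ne'; have := hzv.ne'; have := hcu.ne'; have := hcv.ne'
    ext
    simp only [Finset.mem_inter, Finset.mem_insert, Finset.mem_singleton]
    grind

theorem IsNClique.ncard_setOf_isNClique_inter_card_eq_two
    (hG : ∀ ⦃u v⦄, G.Adj u v → (G.commonNeighbors u v).ncard = 2) {s : Finset V}
    (hs : G.IsNClique 3 s) :
    {t | G.IsNClique 3 t ∧ s ≠ t ∧ (s ∩ t).card = 2}.ncard = 3 := by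
  calc _ = (s.powersetCard 2 : Set (Finset V)).ncard := Set.ncard_congr (fun t _ => s ∩ t) ?_ ?_ ?_
    _ = 3 := by rw [Set.ncard_coe_finset, Finset.card_powersetCard, hs.card_eq]; rfl
  · rintro t ⟨-, -, hcard⟩
    simp [Finset.mem_powersetCard, Finset.inter_subset_left, hcard]
  · rintro t₁ t₂ ⟨ht₁, h₁, hcard⟩ ⟨ht₂, h₂, -⟩ h
    exact hs.eq_of_inter_eq hG ht₁ ht₂ h₁ h₂ hcard h
  · intro e he
    rw [Finset.mem_coe, Finset.mem_powersetCard] at he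
    obtain ⟨t, ht, hne, hinter⟩ := hs.exists_isNClique_inter_eq hG he.1 he.2
    exact ⟨t, ⟨ht, hne, hinter ▸ he.2⟩, hinter⟩

end SimpleGraph

/-- Coordinates of a Farey vertex as a primitive integer vector: `p/q ↦ (p, q)`, `∞ ↦ (1, 0)`. -/
def fareyPair : Option ℚ → ℤ × ℤ
  | none => (1, 0)
  | some x => (x.num, x.den)

def pairDet (X Y : ℤ × ℤ) : ℤ := X.1 * Y.2 - Y.1 * X.2

/-- `X` represents the vertex `w` when it is `± fareyPair w`: Farey vertices are the primitive
vectors of `ℤ²` up to sign. -/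
def Represents (X : ℤ × ℤ) (w : Option ℚ) : Prop :=
  fareyPair w = X ∨ fareyPair w = -X

@[simp]
lemma pairDet_neg_left (X Y : ℤ × ℤ) : pairDet (-X) Y = -pairDet X Y := by
  simp only [pairDet, Prod.fst_neg, Prod.snd_neg]; ring

@[simp]
lemma pairDet_neg_right (X Y : ℤ × ℤ) : pairDet X (-Y) = -pairDet X Y := by
  simp only [pairDet, Prod.fst_neg, Prod.snd_neg]; ring

@[simp]
lemma pairDet_self (X : ℤ × ℤ) : pairDet X X = 0 := by
  simp only [pairDet]; ring

lemma isCoprime_of_abs_pairDet_eq_one {X Y : ℤ × ℤ} (h : |pairDet X Y| = 1) :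
    IsCoprime X.1 X.2 := by
  rcases abs_eq (zero_le_one' ℤ) |>.mp h with h | h
  · exact ⟨Y.2, -Y.1, by rw [← h, pairDet]; ring⟩
  · exact ⟨-Y.2, Y.1, by rw [← neg_eq_iff_eq_neg.mpr h, pairDet]; ring⟩

lemma isCoprime_fareyPair (v : Option ℚ) : IsCoprime (fareyPair v).1 (fareyPair v).2 := by
  rw [Int.isCoprime_iff_gcd_eq_one]
  cases v with
  | none => rfl
  | some x => simpa [fareyPair, Int.gcd] using x.reduced

lemma fareyPair_injective : Function.Injective fareyPair := by
  rintro (_ | x) (_ | y) h <;> simp only [fareyPair, Prod.mk.injEq] at h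
  · rfl
  · exact absurd h.2.symm (by simp [y.den_nz])
  · exact absurd h.2 (by simp [x.den_nz])
  · exact congrArg some (Rat.ext h.1 (by exact_mod_cast h.2))

lemma fareyPair_ne_neg (v w : Option ℚ) : fareyPair v ≠ -fareyPair w := by
  rcases v with _ | x <;> rcases w with _ | y <;>
    simp [fareyPair, Prod.ext_iff]

lemma fareyGraph_adj_iff {u v : Option ℚ} :
    fareyGraph.Adj u v ↔ |pairDet (fareyPair u) (fareyPair v)| = 1 := by
  rcases u with _ | x <;> rcases v with _ | y <;>
    simp [fareyGraph, fareyAdj, fareyPair, pairDet]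

lemma fareyPair_some_div {a b : ℤ} (hb : 0 < b) (h : IsCoprime a b) :
    fareyPair (some (a / b)) = (a, b) := by
  rw [Int.isCoprime_iff_gcd_eq_one] at h
  simp only [fareyPair, Rat.num_div_eq_of_coprime hb h, Rat.den_div_eq_of_coprime hb h]

lemma exists_represents {X : ℤ × ℤ} (hX : IsCoprime X.1 X.2) : ∃ w, Represents X w := by
  obtain ⟨a, b⟩ := X
  rcases lt_trichotomy b 0 with hb | rfl | hb
  · exact ⟨some (-a / -b), Or.inr (by simpa using fareyPair_some_div (neg_pos.mpr hb) hX.neg_neg)⟩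
  · rcases Int.isUnit_iff.mp (isCoprime_zero_right.mp hX) with rfl | rfl
    · exact ⟨none, Or.inl rfl⟩
    · exact ⟨none, Or.inr rfl⟩
  · exact ⟨some (a / b), Or.inl (fareyPair_some_div hb hX)⟩

lemma Represents.eq {X : ℤ × ℤ} {v w : Option ℚ} (hv : Represents X v) (hw : Represents X w) :
    v = w := by
  rcases hv with hv | hv <;> rcases hw with hw | hw
  · exact fareyPair_injective (hv.trans hw.symm)
  · exact absurd (by rw [hv, hw, neg_neg]) (fareyPair_ne_neg v w)
  · exact absurd (by rw [hv, hw, neg_neg]) (fareyPair_ne_neg w v)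
  · exact fareyPair_injective (hv.trans hw.symm)

lemma Represents.pairDet_eq_zero {X Y : ℤ × ℤ} {w : Option ℚ} (hX : Represents X w)
    (hY : Represents Y w) : pairDet X Y = 0 := by
  rcases hX with hX | hX <;> rcases hY with hY | hY <;> simp_all [neg_eq_iff_eq_neg]

/-- Cramer's rule `pairDet X Y • Z = pairDet X Z • Y - pairDet Y Z • X`, with all three
determinants equal to `± 1`. -/
lemma eq_add_or_sub_of_abs_pairDet_eq_one {X Y Z : ℤ × ℤ} (hXY : |pairDet X Y| = 1)
    (hXZ : |pairDet X Z| = 1) (hYZ : |pairDet Y Z| = 1) :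
    (Z = X + Y ∨ Z = -(X + Y)) ∨ (Z = X - Y ∨ Z = -(X - Y)) := by
  obtain ⟨p, q⟩ := X
  obtain ⟨r, s⟩ := Y
  obtain ⟨a, b⟩ := Z
  simp only [pairDet] at hXY hXZ hYZ
  have ha : (p * s - r * q) * a = r * (p * b - a * q) - p * (r * b - a * s) := by ring
  have hb : (p * s - r * q) * b = s * (p * b - a * q) - q * (r * b - a * s) := by ring
  simp only [Prod.ext_iff, Prod.fst_add, Prod.snd_add, Prod.fst_sub, Prod.snd_sub,
    Prod.fst_neg, Prod.snd_neg]
  rcases abs_eq (zero_le_one' ℤ) |>.mp hXY with h₁ | h₁ <;>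
    rcases abs_eq (zero_le_one' ℤ) |>.mp hXZ with h₂ | h₂ <;>
      rcases abs_eq (zero_le_one' ℤ) |>.mp hYZ with h₃ | h₃ <;>
        rw [h₁, h₂, h₃] at ha hb <;> omega

lemma fareyGraph_adj_of_represents {X Y : ℤ × ℤ} {u w : Option ℚ} (hu : Represents X u)
    (hw : Represents Y w) (h : |pairDet X Y| = 1) : fareyGraph.Adj u w := by
  rw [fareyGraph_adj_iff]
  rcases hu with hu | hu <;> rcases hw with hw | hw <;> simpa [hu, hw] using h

lemma fareyGraph_ncard_commonNeighbors {u v : Option ℚ} (huv : fareyGraph.Adj u v) :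
    (fareyGraph.commonNeighbors u v).ncard = 2 := by
  set P := fareyPair u
  set Q := fareyPair v
  have hPQ : |pairDet P Q| = 1 := fareyGraph_adj_iff.mp huv
  have hP : Represents P u := Or.inl rfl
  have hQ : Represents Q v := Or.inl rfl
  obtain ⟨e₁, e₂, e₃, e₄, e₅, e₆, e₇⟩ :
      pairDet P (P + Q) = pairDet P Q ∧ pairDet Q (P + Q) = -pairDet P Q ∧
      pairDet P (P - Q) = -pairDet P Q ∧ pairDet Q (P - Q) = -pairDet P Q ∧
      pairDet (P + Q) Q = pairDet P Q ∧ pairDet (P - Q) Q = pairDet P Q ∧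
      pairDet (P + Q) (P - Q) = -2 * pairDet P Q := by
    refine ⟨?_, ?_, ?_, ?_, ?_, ?_, ?_⟩ <;>
      simp only [pairDet, Prod.fst_add, Prod.snd_add, Prod.fst_sub, Prod.snd_sub] <;> ring
  obtain ⟨w₁, hw₁⟩ := exists_represents (isCoprime_of_abs_pairDet_eq_one (e₅ ▸ hPQ))
  obtain ⟨w₂, hw₂⟩ := exists_represents (isCoprime_of_abs_pairDet_eq_one (e₆ ▸ hPQ))
  have hne : w₁ ≠ w₂ := by
    rintro rfl
    have h := congrArg abs (hw₁.pairDet_eq_zero hw₂)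
    rw [e₇, abs_mul, hPQ] at h
    norm_num at h
  suffices fareyGraph.commonNeighbors u v = {w₁, w₂} by rw [this, Set.ncard_pair hne]
  ext w
  simp only [SimpleGraph.mem_commonNeighbors, Set.mem_insert_iff, Set.mem_singleton_iff]
  constructor
  · rintro ⟨hu, hv⟩
    rcases eq_add_or_sub_of_abs_pairDet_eq_one hPQ (fareyGraph_adj_iff.mp hu)
      (fareyGraph_adj_iff.mp hv) with h | h
    · exact Or.inl (Represents.eq h hw₁)
    · exact Or.inr (Represents.eq h hw₂)
  · rintro (rfl | rfl)
    · exact ⟨fareyGraph_adj_of_represents hP hw₁ (by rwa [e₁]),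
        fareyGraph_adj_of_represents hQ hw₁ (by rwa [e₂, abs_neg])⟩
    · exact ⟨fareyGraph_adj_of_represents hP hw₂ (by rwa [e₃, abs_neg]),
        fareyGraph_adj_of_represents hQ hw₂ (by rwa [e₄, abs_neg])⟩

lemma fareyGraph_neighborSet_infinite (v : Option ℚ) : (fareyGraph.neighborSet v).Infinite := by
  set P := fareyPair v
  obtain ⟨x, y, hxy⟩ := isCoprime_fareyPair v
  set X : ℤ → ℤ × ℤ := fun n => (-y, x) + n • P
  have hdet : ∀ n m : ℤ, pairDet (X n) (X m) = n - m := by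
    intro n m
    simp only [X, pairDet, Prod.fst_add, Prod.snd_add, Prod.smul_fst, Prod.smul_snd, smul_eq_mul]
    linear_combination (n - m) * hxy
  have hdetP : ∀ n : ℤ, pairDet P (X n) = 1 := by
    intro n
    simp only [X, pairDet, Prod.fst_add, Prod.snd_add, Prod.smul_fst, Prod.smul_snd, smul_eq_mul]
    linear_combination hxy
  choose w hw using fun n => exists_represents
    (isCoprime_of_abs_pairDet_eq_one (X := X n) (Y := X (n - 1)) (by rw [hdet]; norm_num))
  refine Set.infinite_of_injective_forall_mem (f := w) (fun n m h => ?_) (fun n => ?_)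
  · have h₀ := (hw n).pairDet_eq_zero (h ▸ hw m)
    rwa [hdet, sub_eq_zero] at h₀
  · exact fareyGraph_adj_of_represents (Or.inl rfl) (hw n) (by rw [hdetP, abs_one])

lemma fareyDual_neighborSet_ncard (T : FareyTriangle) : (fareyDual.neighborSet T).ncard = 3 := by
  let val : FareyTriangle → Finset (Option ℚ) := fun T' => T'.1
  have hext : ∀ T' : FareyTriangle, T = T' ↔ T.1 = T'.1 := fun _ => Subtype.ext_iff
  have h : fareyDual.neighborSet T =
      val ⁻¹' {t | fareyGraph.IsNClique 3 t ∧ T.1 ≠ t ∧ (T.1 ∩ t).card = 2} := by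
    ext T'
    simp [val, fareyDual, T'.2, hext]
  rw [h]
  exact (Set.ncard_preimage_of_injective_subset_range (fun _ _ => Subtype.ext)
    (fun t ht => ⟨⟨t, ht.1⟩, rfl⟩)).trans
    (T.2.ncard_setOf_isNClique_inter_card_eq_two fun _ _ => fareyGraph_ncard_commonNeighbors)

lemma modelGraph_neighborSet_triangle (T : FareyTriangle) :
    modelGraph.neighborSet (.inr (.inr T)) =
      (fun x => .inr (.inl x)) '' (T.1 : Set (Option ℚ)) ∪
        (fun T' => .inr (.inr T')) '' fareyDual.neighborSet T := by
  ext (x | x | T') <;> simp [modelGraph, modelAdj, fareyDual]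

lemma modelGraph_neighborSet_triangle_ncard (T : FareyTriangle) :
    (modelGraph.neighborSet (.inr (.inr T))).ncard = 6 := by
  have hdual := fareyDual_neighborSet_ncard T
  have hfin : (fareyDual.neighborSet T).Finite :=
    Set.finite_of_ncard_ne_zero (by rw [hdual]; norm_num)
  have hT : ((fun x => .inr (.inl x)) '' (T.1 : Set (Option ℚ)) : Set ModelVertex).ncard = 3 :=
    (Set.ncard_image_of_injective _ (Sum.inr_injective.comp Sum.inl_injective)).trans
      ((Set.ncard_coe_finset _).trans T.2.card_eq)
  have hT' : ((fun T' => .inr (.inr T')) '' fareyDual.neighborSet T : Set ModelVertex).ncard = 3 :=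
    (Set.ncard_image_of_injective _ (Sum.inr_injective.comp Sum.inr_injective)).trans hdual
  rw [modelGraph_neighborSet_triangle, Set.ncard_union_eq _ (T.1.finite_toSet.image _)
    (hfin.image _), hT, hT']
  exact Set.disjoint_image_image fun _ _ _ _ h => Sum.inl_ne_inr (Sum.inr_injective h)

lemma modelGraph_neighborSet_farey_infinite (x : Option ℚ) :
    (modelGraph.neighborSet (.inl x)).Infinite :=
  Set.Infinite.mono (by rintro _ ⟨y, hy, rfl⟩; exact hy)
    ((fareyGraph_neighborSet_infinite x).image Sum.inl_injective.injOn)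

lemma modelGraph_neighborSet_dual_infinite (x : Option ℚ) :
    (modelGraph.neighborSet (.inr (.inl x))).Infinite := by
  have h : {s | fareyGraph.IsNClique 3 s ∧ x ∈ s}.Infinite :=
    SimpleGraph.infinite_setOf_isNClique_three_mem
      (fun _ _ h => Set.nonempty_of_ncard_ne_zero (by simp [fareyGraph_ncard_commonNeighbors h]))
      (fareyGraph_neighborSet_infinite x)
  have h' : {T : FareyTriangle | x ∈ T.1}.Infinite :=
    Set.Infinite.of_image (fun T : FareyTriangle => T.1) (h.mono fun s hs => ⟨⟨s, hs.1⟩, hs.2, rfl⟩)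
  exact Set.Infinite.mono (by rintro _ ⟨T, hT, rfl⟩; exact hT)
    (h'.image fun _ _ _ _ h => Sum.inr_injective (Sum.inr_injective h))

/-- In the model graph `G`, a vertex has a finite neighbour set iff it is a
triangle-vertex, and every triangle-vertex has degree exactly `6`. -/
theorem modelGraph_finite_degree_iff_triangle_and_degree_six :
    (∀ v : ModelVertex, (modelGraph.neighborSet v).Finite ↔
      ∃ T : FareyTriangle, v = .inr (.inr T)) ∧
    ∀ T : FareyTriangle,
      (modelGraph.neighborSet (.inr (.inr T))).ncard = 6 := by
  refine ⟨?_, modelGraph_neighborSet_triangle_ncard⟩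
  rintro (x | x | T)
  · exact iff_of_false (modelGraph_neighborSet_farey_infinite x) (by simp)
  · exact iff_of_false (modelGraph_neighborSet_dual_infinite x) (by simp)
  · refine iff_of_true (Set.finite_of_ncard_ne_zero ?_) ⟨T, rfl⟩
    rw [modelGraph_neighborSet_triangle_ncard]
    norm_num
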